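/- arXiv:2603.03843 — 4 statements merged into one kernel-verified Lean document; each statement's English description precedes it below -/
import Mathlib

section
/- Let λ > 0, let t, p ∈ ℕ with p ≥ 1, and let x_1, …, x_t ∈ ℝ^p satisfy ‖x_τ‖₂ ≤ L for all τ ∈ {1,…,t}, where L > 0. Define V_t := λ I_p + Σ_{τ=1}^t x_τ x_τᵀ. Then log( det(V_t) / det(λ I_p) ) ≤ p · log( 1 + t L² / (λ p) ). -/
/-!
AM–GM applied to the eigenvalues of the positive definite matrix `V` gives
`det V ≤ (tr V / p) ^ p`, and `tr V ≤ λ p + t L²` since each rank-one term `x_τ x_τᵀ` has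
trace `‖x_τ‖² ≤ L²`. Dividing by `det (λ I) = λ ^ p` and taking logarithms gives the bound.
-/

open Matrix Finset

theorem Real.prod_le_sum_div_card_pow {ι : Type*} (s : Finset ι) (z : ι → ℝ)
    (hz : ∀ i ∈ s, 0 ≤ z i) : ∏ i ∈ s, z i ≤ ((∑ i ∈ s, z i) / #s) ^ #s := by
  rcases s.eq_empty_or_nonempty with rfl | hs
  · simp
  have hcard : (0 : ℝ) < #s := by exact_mod_cast hs.card_pos
  have amgm := Real.geom_mean_le_arith_mean s (fun _ ↦ 1) z (fun _ _ ↦ zero_le_one)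
    (by simpa using hcard) hz
  simp only [Real.rpow_one, one_mul, sum_const, nsmul_eq_mul, mul_one] at amgm
  calc ∏ i ∈ s, z i = ((∏ i ∈ s, z i) ^ ((#s : ℝ)⁻¹)) ^ #s := by
        rw [← Real.rpow_natCast, ← Real.rpow_mul (prod_nonneg hz), inv_mul_cancel₀ hcard.ne',
          Real.rpow_one]
    _ ≤ ((∑ i ∈ s, z i) / #s) ^ #s := by gcongr; exact Real.rpow_nonneg (prod_nonneg hz) _

theorem Matrix.PosSemidef.det_le_trace_div_card_pow {n : Type*} [Fintype n] [DecidableEq n]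
    {A : Matrix n n ℝ} (hA : A.PosSemidef) :
    A.det ≤ (A.trace / Fintype.card n) ^ Fintype.card n := by
  simpa [hA.isHermitian.det_eq_prod_eigenvalues, hA.isHermitian.trace_eq_sum_eigenvalues] using
    Real.prod_le_sum_div_card_pow univ _ fun i _ ↦ hA.eigenvalues_nonneg i

theorem Matrix.trace_sum_vecMulVec_self_le {ι n : Type*} [Fintype ι] [Fintype n]
    (x : ι → n → ℝ) {L : ℝ} (hx : ∀ τ, √(x τ ⬝ᵥ x τ) ≤ L) :
    (∑ τ, vecMulVec (x τ) (x τ)).trace ≤ Fintype.card ι * L ^ 2 := by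
  rw [trace_sum]
  simpa using sum_le_card_nsmul univ _ _ fun τ _ ↦
    (trace_vecMulVec (x τ) (x τ)).trans_le (Real.sqrt_le_iff.mp (hx τ)).2

theorem stmt1_general {p : ℕ} (hp : 1 ≤ p) (t : ℕ) (lam L : ℝ) (hlam : 0 < lam)
    (x : Fin t → Fin p → ℝ) (hx : ∀ τ, Real.sqrt (x τ ⬝ᵥ x τ) ≤ L)
    (V : Matrix (Fin p) (Fin p) ℝ)
    (hV : V = lam • (1 : Matrix (Fin p) (Fin p) ℝ) + ∑ τ, vecMulVec (x τ) (x τ)) :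
    Real.log (V.det / (lam • (1 : Matrix (Fin p) (Fin p) ℝ)).det)
      ≤ p * Real.log (1 + t * L ^ 2 / (lam * p)) := by
  have hPD : V.PosDef := hV ▸ (PosDef.one.smul hlam).add_posSemidef
    (posSemidef_sum univ fun τ _ ↦ by simpa using posSemidef_vecMulVec_self_star (x τ))
  have htrace : V.trace ≤ lam * p + t * L ^ 2 := by
    simpa [hV, trace_add, mul_comm] using trace_sum_vecMulVec_self_le x hx
  have hlamp : 0 < lam * p := mul_pos hlam (by exact_mod_cast hp)
  have hratio : V.det / (lam • (1 : Matrix (Fin p) (Fin p) ℝ)).det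
      ≤ (1 + t * L ^ 2 / (lam * p)) ^ p := by
    calc V.det / (lam • (1 : Matrix (Fin p) (Fin p) ℝ)).det
        ≤ (V.trace / p) ^ p / lam ^ p := by
          simpa [det_smul] using
            div_le_div_of_nonneg_right hPD.posSemidef.det_le_trace_div_card_pow (by positivity)
      _ = (V.trace / (lam * p)) ^ p := by rw [← div_pow, div_div, mul_comm]
      _ ≤ (1 + t * L ^ 2 / (lam * p)) ^ p := by
          gcongr
          · exact div_nonneg hPD.posSemidef.trace_nonneg hlamp.le
          · rwa [div_le_iff₀ hlamp, add_mul, div_mul_cancel₀ _ hlamp.ne', one_mul]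
  calc Real.log (V.det / (lam • (1 : Matrix (Fin p) (Fin p) ℝ)).det)
      ≤ Real.log ((1 + t * L ^ 2 / (lam * p)) ^ p) :=
        Real.log_le_log (div_pos hPD.det_pos (by simp [hlam])) hratio
    _ = p * Real.log (1 + t * L ^ 2 / (lam * p)) := Real.log_pow _ _

/-- determinant bound, Lemma 1 part 2.
If `‖x τ‖₂ ≤ L` for all `τ`, and `V_t = λ I_p + ∑ x_τ x_τᵀ`, then
`log (det V_t / det (λ I_p)) ≤ p log (1 + t L² / (λ p))`. -/
theorem stmt1 {p : ℕ} (hp : 1 ≤ p) (t : ℕ) (lam L : ℝ) (hlam : 0 < lam) (hL : 0 < L)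
    (x : Fin t → Fin p → ℝ) (hx : ∀ τ, Real.sqrt (x τ ⬝ᵥ x τ) ≤ L)
    (V : Matrix (Fin p) (Fin p) ℝ)
    (hV : V = lam • (1 : Matrix (Fin p) (Fin p) ℝ) + ∑ τ, vecMulVec (x τ) (x τ)) :
    Real.log (V.det / (lam • (1 : Matrix (Fin p) (Fin p) ℝ)).det)
      ≤ p * Real.log (1 + t * L ^ 2 / (lam * p)) :=
  stmt1_general hp t lam L hlam x hx V hV
end

section
/- Let λ > 0, let x_1, …, x_n ∈ ℝ^k, ε_1, …, ε_n ∈ ℝ, and δ ∈ ℝ^k, and set r_τ := x_τᵀ δ + ε_τ for τ ∈ {1,…,n}. Define V := λ I_k + Σ_{τ=1}^n x_τ x_τᵀ and the ridge estimator δ̂ := V^{-1} Σ_{τ=1}^n x_τ r_τ. Then ‖δ̂ − δ‖_V ≤ ‖ Σ_{τ=1}^n x_τ ε_τ ‖_{V^{-1}} + √λ · ‖δ‖₂. -/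
/-!
Since `∑ τ, r τ • x τ = (V - λ I) δ + S` with `S = ∑ τ, ε τ • x τ`, the error is
`δ̂ - δ = V⁻¹ S - λ V⁻¹ δ`. The first term has `V`-norm exactly `‖S‖_{V⁻¹}`. For the second,
`V ≥ λ I` gives `λ² δᵀ V⁻¹ δ ≤ λ ‖δ‖²`; writing `w = V⁻¹ δ` this is `λ wᵀ V w ≤ ‖V w‖²`, which
holds because `V = λ I + M` with `M ⪰ 0`.
-/

open Matrix

noncomputable def wnorm {k : ℕ} (A : Matrix (Fin k) (Fin k) ℝ) (x : Fin k → ℝ) : ℝ :=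
  Real.sqrt (x ⬝ᵥ A.mulVec x)

lemma mul_dotProduct_mulVec_le_mulVec_dotProduct {n : Type*} [Fintype n] [DecidableEq n]
    {M : Matrix n n ℝ} (hM : M.PosSemidef) {lam : ℝ} (hlam : 0 ≤ lam) (w : n → ℝ) :
    lam * (w ⬝ᵥ (lam • 1 + M) *ᵥ w) ≤ ((lam • 1 + M) *ᵥ w) ⬝ᵥ ((lam • 1 + M) *ᵥ w) := by
  have hMw : 0 ≤ w ⬝ᵥ M *ᵥ w := by simpa using hM.dotProduct_mulVec_nonneg w
  have hww : 0 ≤ M *ᵥ w ⬝ᵥ M *ᵥ w := Finset.sum_nonneg fun i _ => mul_self_nonneg _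
  simp only [add_mulVec, smul_mulVec, one_mulVec, dotProduct_add, add_dotProduct,
    dotProduct_smul, smul_dotProduct, smul_eq_mul, dotProduct_comm (M *ᵥ w) w]
  nlinarith [mul_nonneg hlam hMw]

lemma posSemidef_sum_vecMulVec_self {ι n : Type*} [Fintype ι] [Finite n] (x : ι → n → ℝ) :
    (∑ τ, vecMulVec (x τ) (x τ)).PosSemidef :=
  posSemidef_sum _ fun τ _ => by simpa using posSemidef_vecMulVec_self_star (x τ)

lemma ridge_estimate_sub_eq {ι n : Type*} [Fintype ι] [Fintype n] [DecidableEq n] (lam : ℝ)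
    (x : ι → n → ℝ) (ε : ι → ℝ) (δ : n → ℝ)
    (hV : IsUnit (lam • 1 + ∑ τ, vecMulVec (x τ) (x τ)).det) :
    (lam • 1 + ∑ τ, vecMulVec (x τ) (x τ))⁻¹ *ᵥ (∑ τ, (x τ ⬝ᵥ δ + ε τ) • x τ) - δ
      = (lam • 1 + ∑ τ, vecMulVec (x τ) (x τ))⁻¹ *ᵥ (∑ τ, ε τ • x τ)
        - lam • (lam • 1 + ∑ τ, vecMulVec (x τ) (x τ))⁻¹ *ᵥ δ := by
  set V := lam • (1 : Matrix n n ℝ) + ∑ τ, vecMulVec (x τ) (x τ)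
  have hsum : ∑ τ, (x τ ⬝ᵥ δ + ε τ) • x τ = V *ᵥ δ - lam • δ + ∑ τ, ε τ • x τ := by
    simp only [V, add_mulVec, smul_mulVec, one_mulVec, sum_mulVec, vecMulVec_mulVec,
      op_smul_eq_smul, add_smul, Finset.sum_add_distrib]
    abel
  rw [hsum, mulVec_add, mulVec_sub, mulVec_mulVec, nonsing_inv_mul V hV, one_mulVec, mulVec_smul]
  abel

section wnorm

variable {k : ℕ}

lemma wnorm_conjTranspose_mul_self {m : Type*} [Fintype m] (B : Matrix m (Fin k) ℝ)
    (y : Fin k → ℝ) : wnorm (Bᴴ * B) y = ‖WithLp.toLp 2 (B *ᵥ y)‖ := by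
  rw [wnorm, EuclideanSpace.norm_eq, ← mulVec_mulVec, dotProduct_mulVec,
    conjTranspose_eq_transpose_of_trivial, vecMul_transpose]
  simp [dotProduct, sq]

open scoped MatrixOrder in
lemma wnorm_add_le {A : Matrix (Fin k) (Fin k) ℝ} (hA : A.PosSemidef) (u v : Fin k → ℝ) :
    wnorm A (u + v) ≤ wnorm A u + wnorm A v := by
  obtain ⟨B, rfl⟩ := CStarAlgebra.nonneg_iff_eq_star_mul_self.mp hA.nonneg
  simp only [star_eq_conjTranspose, wnorm_conjTranspose_mul_self, mulVec_add, WithLp.toLp_add]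
  exact norm_add_le _ _

lemma wnorm_smul (A : Matrix (Fin k) (Fin k) ℝ) (c : ℝ) (y : Fin k → ℝ) :
    wnorm A (c • y) = |c| * wnorm A y := by
  rw [wnorm, wnorm, mulVec_smul, smul_dotProduct, dotProduct_smul, smul_eq_mul, smul_eq_mul,
    ← mul_assoc, Real.sqrt_mul (mul_self_nonneg c), Real.sqrt_mul_self_eq_abs]

lemma wnorm_sub_le {A : Matrix (Fin k) (Fin k) ℝ} (hA : A.PosSemidef) (u v : Fin k → ℝ) :
    wnorm A (u - v) ≤ wnorm A u + wnorm A v := by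
  have hneg : wnorm A (-v) = wnorm A v := by
    rw [← neg_one_smul ℝ v, wnorm_smul, abs_neg, abs_one, one_mul]
  rw [sub_eq_add_neg, ← hneg]
  exact wnorm_add_le hA u (-v)

lemma wnorm_inv_mulVec {V : Matrix (Fin k) (Fin k) ℝ} (hV : IsUnit V.det) (y : Fin k → ℝ) :
    wnorm V (V⁻¹ *ᵥ y) = wnorm V⁻¹ y := by
  rw [wnorm, wnorm, mulVec_mulVec, mul_nonsing_inv V hV, one_mulVec, dotProduct_comm]

lemma wnorm_smul_inv_mulVec_le {M : Matrix (Fin k) (Fin k) ℝ} (hM : M.PosSemidef)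
    {lam : ℝ} (hlam : 0 ≤ lam) (hV : IsUnit (lam • 1 + M).det) (δ : Fin k → ℝ) :
    wnorm (lam • 1 + M) (lam • (lam • 1 + M)⁻¹ *ᵥ δ) ≤ √lam * √(δ ⬝ᵥ δ) := by
  set V := lam • (1 : Matrix (Fin k) (Fin k) ℝ) + M
  set w := V⁻¹ *ᵥ δ
  have hδ : δ = V *ᵥ w := by rw [mulVec_mulVec, mul_nonsing_inv V hV, one_mulVec]
  calc wnorm V (lam • w) = √lam * √(lam * (w ⬝ᵥ V *ᵥ w)) := by
        rw [wnorm_smul, abs_of_nonneg hlam, wnorm, ← Real.sqrt_mul hlam, ← mul_assoc,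
          Real.sqrt_mul (mul_self_nonneg lam), Real.sqrt_mul_self hlam]
    _ ≤ √lam * √(δ ⬝ᵥ δ) := by
        gcongr
        rw [hδ]
        exact mul_dotProduct_mulVec_le_mulVec_dotProduct hM hlam w

end wnorm

/-- deterministic ridge-regression error bound.
With `r_τ = x_τᵀ δ + ε_τ`, `V = λ I_k + ∑ x_τ x_τᵀ` and
`δ̂ = V⁻¹ ∑ x_τ r_τ`, one has `‖δ̂ − δ‖_V ≤ ‖∑ x_τ ε_τ‖_{V⁻¹} + √λ ‖δ‖₂`. -/
theorem stmt6 {k n : ℕ} (lam : ℝ) (hlam : 0 < lam)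
    (x : Fin n → Fin k → ℝ) (ε : Fin n → ℝ) (δ : Fin k → ℝ)
    (r : Fin n → ℝ) (hr : ∀ τ, r τ = x τ ⬝ᵥ δ + ε τ)
    (V : Matrix (Fin k) (Fin k) ℝ)
    (hV : V = lam • (1 : Matrix (Fin k) (Fin k) ℝ) + ∑ τ, vecMulVec (x τ) (x τ))
    (δhat : Fin k → ℝ) (hδhat : δhat = V⁻¹.mulVec (∑ τ, r τ • x τ)) :
    wnorm V (δhat - δ)
      ≤ wnorm V⁻¹ (∑ τ, ε τ • x τ) + Real.sqrt lam * Real.sqrt (δ ⬝ᵥ δ) := by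
  have hM := posSemidef_sum_vecMulVec_self x
  have hVpd : V.PosDef := hV ▸ (PosDef.one.smul hlam).add_posSemidef hM
  have hdet : IsUnit V.det := (isUnit_iff_isUnit_det V).mp hVpd.isUnit
  subst hV hδhat
  simp only [hr, ridge_estimate_sub_eq lam x ε δ hdet]
  calc _ ≤ _ + _ := wnorm_sub_le hVpd.posSemidef _ _
    _ ≤ _ := by
      rw [wnorm_inv_mulVec hdet]
      gcongr
      exact wnorm_smul_inv_mulVec_le hM hlam.le hdet δ
end

section
/- Let p ≥ 1, 1 ≤ k ≤ p, λ ≥ 0, and let x_1, …, x_n ∈ ℝ^p satisfy ‖x_i‖₂ ≤ L for all i. Let Û ∈ ℝ^{p×k} have orthonormal columns, let v ∈ ℝ^p, and assume S := λ I_k + Σ_{i=1}^n Ûᵀ x_i x_iᵀ Û is invertible. Then ‖ Σ_{i=1}^n Ûᵀ x_i (x_iᵀ v) ‖_{S^{-1}} ≤ L ‖v‖₂ √(k n). -/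
open Matrix

/-!
With `uᵢ = Ûᵀxᵢ`, `aᵢ = xᵢᵀv` and `M = S⁻¹`, Cauchy–Schwarz for the positive semidefinite form `M`
gives `‖∑ aᵢ uᵢ‖²_M ≤ (∑ aᵢ²) (∑ ‖uᵢ‖²_M)`. The first factor is at most `n L² ‖v‖²`, and the
second is `tr (S⁻¹ ∑ uᵢ uᵢᵀ) = tr (I - λ S⁻¹) ≤ k` because `S⁻¹` is positive semidefinite.
-/

namespace Matrix

variable {m ι : Type*} [Fintype ι]

theorem PosSemidef.smul_one_add [DecidableEq m] {G : Matrix m m ℝ} (hG : G.PosSemidef)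
    {lam : ℝ} (hlam : 0 ≤ lam) : (lam • 1 + G).PosSemidef :=
  (PosSemidef.one.smul hlam).add hG

variable [Fintype m]

theorem PosSemidef.dotProduct_mulVec_sq_le {M : Matrix m m ℝ} (hM : M.PosSemidef)
    (a b : m → ℝ) : (a ⬝ᵥ M *ᵥ b) ^ 2 ≤ (a ⬝ᵥ M *ᵥ a) * (b ⬝ᵥ M *ᵥ b) := by
  classical
  have hsymm : b ⬝ᵥ M *ᵥ a = a ⬝ᵥ M *ᵥ b := by
    rw [dotProduct_mulVec, ← mulVec_transpose, ← conjTranspose_eq_transpose_of_trivial, hM.1.eq,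
      dotProduct_comm]
  have hcs := (toBilin' M).apply_mul_apply_le_of_forall_zero_le
    (fun x => by simpa [toBilin'_apply'] using hM.dotProduct_mulVec_nonneg x) a b
  simp only [toBilin'_apply', hsymm] at hcs
  rwa [sq]

theorem PosSemidef.dotProduct_mulVec_sum_smul_le {M : Matrix m m ℝ} (hM : M.PosSemidef)
    (a : ι → ℝ) (u : ι → m → ℝ) :
    (∑ i, a i • u i) ⬝ᵥ M *ᵥ (∑ i, a i • u i)
      ≤ (∑ i, a i ^ 2) * ∑ i, u i ⬝ᵥ M *ᵥ u i := by
  set z := ∑ i, a i • u i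
  set Q := z ⬝ᵥ M *ᵥ z
  have hQ : 0 ≤ Q := by simpa using hM.dotProduct_mulVec_nonneg z
  have hQ_sum : Q = ∑ i, a i * (u i ⬝ᵥ M *ᵥ z) := by
    simp only [Q, z, sum_dotProduct, smul_dotProduct, smul_eq_mul]
  have hQ_sq : Q ^ 2 ≤ (∑ i, a i ^ 2) * (∑ i, u i ⬝ᵥ M *ᵥ u i) * Q := by
    calc Q ^ 2 ≤ (∑ i, a i ^ 2) * ∑ i, (u i ⬝ᵥ M *ᵥ z) ^ 2 :=
          hQ_sum ▸ Finset.sum_mul_sq_le_sq_mul_sq _ _ _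
      _ ≤ (∑ i, a i ^ 2) * ∑ i, (u i ⬝ᵥ M *ᵥ u i) * Q := by
          gcongr with i
          exact hM.dotProduct_mulVec_sq_le (u i) z
      _ = _ := by rw [← Finset.sum_mul, mul_assoc]
  rcases hQ.eq_or_lt with hQ0 | hQ0
  · rw [← hQ0]
    exact mul_nonneg (Finset.sum_nonneg fun i _ => sq_nonneg _)
      (Finset.sum_nonneg fun i _ => by simpa using hM.dotProduct_mulVec_nonneg (u i))
  · exact le_of_mul_le_mul_right (by rwa [← sq]) hQ0

theorem sum_dotProduct_mulVec_eq_trace_mul (M : Matrix m m ℝ) (u : ι → m → ℝ) :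
    ∑ i, u i ⬝ᵥ M *ᵥ u i = trace (M * ∑ i, vecMulVec (u i) (u i)) := by
  simp only [Finset.mul_sum, trace_sum, mul_vecMulVec, trace_vecMulVec, dotProduct_comm]

theorem trace_inv_mul_le_card [DecidableEq m] {G : Matrix m m ℝ} (hG : G.PosSemidef)
    {lam : ℝ} (hlam : 0 ≤ lam) (hS : IsUnit (lam • 1 + G)) :
    trace ((lam • 1 + G)⁻¹ * G) ≤ Fintype.card m := by
  set S := lam • 1 + G
  have hinv_psd : S⁻¹.PosSemidef := (hG.smul_one_add hlam).inv
  have hG_eq : S⁻¹ * G = 1 - lam • S⁻¹ := by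
    have h : S⁻¹ * (lam • 1 + G) = 1 := nonsing_inv_mul S ((isUnit_iff_isUnit_det S).mp hS)
    rw [mul_add, Matrix.mul_smul, mul_one] at h
    exact eq_sub_of_add_eq' h
  rw [hG_eq, trace_sub, trace_smul, trace_one, smul_eq_mul]
  linarith [mul_nonneg hlam hinv_psd.trace_nonneg]

end Matrix

theorem stmt12_general {p k n : ℕ}
    (lam : ℝ) (hlam : 0 ≤ lam) (L : ℝ)
    (x : Fin n → Fin p → ℝ) (hx : ∀ i, Real.sqrt (x i ⬝ᵥ x i) ≤ L)
    (U : Matrix (Fin p) (Fin k) ℝ)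
    (v : Fin p → ℝ)
    (S : Matrix (Fin k) (Fin k) ℝ)
    (hS : S = lam • (1 : Matrix (Fin k) (Fin k) ℝ)
        + ∑ i, vecMulVec (Uᵀ.mulVec (x i)) (Uᵀ.mulVec (x i)))
    (hinv : IsUnit S) :
    wnorm S⁻¹ (∑ i, (x i ⬝ᵥ v) • Uᵀ.mulVec (x i))
      ≤ L * Real.sqrt (v ⬝ᵥ v) * Real.sqrt (k * n) := by
  rcases n.eq_zero_or_pos with rfl | hn
  · simp [wnorm]
  have hL : 0 ≤ L := (Real.sqrt_nonneg _).trans (hx ⟨0, hn⟩)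
  have hvv : 0 ≤ v ⬝ᵥ v := by simpa using dotProduct_star_self_nonneg v
  set u : Fin n → Fin k → ℝ := fun i => Uᵀ *ᵥ x i
  have hG : (∑ i, vecMulVec (u i) (u i)).PosSemidef :=
    posSemidef_sum _ fun i _ => posSemidef_vecMulVec_self_star (u i)
  have hSinv : S⁻¹.PosSemidef := hS ▸ (hG.smul_one_add hlam).inv
  have hcoeff : ∑ i, (x i ⬝ᵥ v) ^ 2 ≤ L ^ 2 * (v ⬝ᵥ v) * n := by
    refine (Finset.sum_le_card_nsmul _ _ (L ^ 2 * (v ⬝ᵥ v)) fun i _ => ?_).trans_eq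
      (by simp [mul_comm])
    have hcs := PosSemidef.one.dotProduct_mulVec_sq_le (x i) v
    rw [one_mulVec, one_mulVec] at hcs
    exact hcs.trans (mul_le_mul_of_nonneg_right (Real.sqrt_le_iff.mp (hx i)).2 hvv)
  have hdesign : ∑ i, u i ⬝ᵥ S⁻¹ *ᵥ u i ≤ k := by
    rw [sum_dotProduct_mulVec_eq_trace_mul, hS]
    simpa using trace_inv_mul_le_card hG hlam (hS ▸ hinv)
  have hdesign_nonneg : 0 ≤ ∑ i, u i ⬝ᵥ S⁻¹ *ᵥ u i :=
    Finset.sum_nonneg fun i _ => by simpa using hSinv.dotProduct_mulVec_nonneg (u i)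
  calc wnorm S⁻¹ (∑ i, (x i ⬝ᵥ v) • u i)
      ≤ √((∑ i, (x i ⬝ᵥ v) ^ 2) * ∑ i, u i ⬝ᵥ S⁻¹ *ᵥ u i) :=
        Real.sqrt_le_sqrt (hSinv.dotProduct_mulVec_sum_smul_le _ _)
    _ ≤ √(L ^ 2 * (v ⬝ᵥ v) * n * k) :=
        Real.sqrt_le_sqrt (mul_le_mul hcoeff hdesign hdesign_nonneg (by positivity))
    _ = L * √(v ⬝ᵥ v) * √(k * n) := by
        rw [show L ^ 2 * (v ⬝ᵥ v) * n * k = (L * √(v ⬝ᵥ v)) ^ 2 * (k * n) by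
            rw [mul_pow, Real.sq_sqrt hvv]; ring,
          Real.sqrt_mul (sq_nonneg _), Real.sqrt_sq (by positivity)]

/-- Cauchy–Schwarz design bound.
If `‖x_i‖₂ ≤ L`, `Û` has orthonormal columns, and
`S = λ I_k + ∑ Ûᵀ x_i x_iᵀ Û` is invertible, then
`‖∑ Ûᵀ x_i (x_iᵀ v)‖_{S⁻¹} ≤ L ‖v‖₂ √(k n)`. -/
theorem stmt12 {p k n : ℕ} (hp : 1 ≤ p) (hk1 : 1 ≤ k) (hkp : k ≤ p)
    (lam : ℝ) (hlam : 0 ≤ lam) (L : ℝ)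
    (x : Fin n → Fin p → ℝ) (hx : ∀ i, Real.sqrt (x i ⬝ᵥ x i) ≤ L)
    (U : Matrix (Fin p) (Fin k) ℝ) (hU : Uᵀ * U = 1)
    (v : Fin p → ℝ)
    (S : Matrix (Fin k) (Fin k) ℝ)
    (hS : S = lam • (1 : Matrix (Fin k) (Fin k) ℝ)
        + ∑ i, vecMulVec (Uᵀ.mulVec (x i)) (Uᵀ.mulVec (x i)))
    (hinv : IsUnit S) :
    wnorm S⁻¹ (∑ i, (x i ⬝ᵥ v) • Uᵀ.mulVec (x i))
      ≤ L * Real.sqrt (v ⬝ᵥ v) * Real.sqrt (k * n) :=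
  stmt12_general lam hlam L x hx U v S hS hinv
end

section
/- Let p ≥ 1, 1 ≤ k < p, and let constants L, M, c, Δ > 0. Let Û₁ ∈ ℝ^{p×k} and U₂ ∈ ℝ^{p×(p−k)} have orthonormal columns with ‖Û₁ᵀU₂‖_op ≤ Δ. Let φ_1, …, φ_n ∈ ℝ^p with ‖φ_t‖₂ ≤ L for all t, and let δ ∈ ℝ^p with ‖δ‖₂ ≤ M. Assume S := Û₁ᵀ ( Σ_{t=1}^n φ_t φ_tᵀ ) Û₁ satisfies S − c n I_k positive semidefinite. Then ‖ Σ_{t=1}^n Û₁ᵀ U₂U₂ᵀ φ_t φ_tᵀ U₂U₂ᵀ δ ‖_{S^{-1}} ≤ √(n/c) · Δ · L² M. -/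
open Matrix

/-- The operator norm of a (possibly rectangular) real matrix, induced by the
Euclidean norms on its domain and codomain. -/
noncomputable def opNorm {m n : Type*} [Fintype m] [Fintype n] [DecidableEq n]
    (A : Matrix m n ℝ) : ℝ :=
  ‖LinearMap.toContinuousLinearMap (Matrix.toEuclideanLin A)‖

/-! Writing `P = U₂U₂ᵀ`, the `t`-th summand is `⟨U₂ᵀφ_t, U₂ᵀδ⟩ • (Û₁ᵀU₂)(U₂ᵀφ_t)`, and `U₂ᵀ` is a
contraction, so the leakage vector `x` has Euclidean norm at most `n Δ L² M`. The bound
`S ⪰ c n I` gives `c n · xᵀS⁻¹x ≤ ‖x‖²`: for `z = S⁻¹x`, `c n ‖z‖² ≤ zᵀSz = ⟨z, x⟩ ≤ ‖z‖ ‖x‖`. -/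

open WithLp
open scoped Matrix.Norms.L2Operator

section Euclidean

variable {ι : Type*} [Fintype ι]

lemma dotProduct_eq_inner_toLp (x y : ι → ℝ) : x ⬝ᵥ y = inner ℝ (toLp 2 x) (toLp 2 y) := by
  rw [EuclideanSpace.inner_toLp_toLp, star_trivial, dotProduct_comm]

lemma dotProduct_self_eq_norm_sq (x : ι → ℝ) : x ⬝ᵥ x = ‖toLp 2 x‖ ^ 2 := by
  rw [dotProduct_eq_inner_toLp, real_inner_self_eq_norm_sq]

lemma sqrt_dotProduct_self (x : ι → ℝ) : √(x ⬝ᵥ x) = ‖toLp 2 x‖ := by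
  rw [dotProduct_self_eq_norm_sq, Real.sqrt_sq (norm_nonneg _)]

end Euclidean

lemma opNorm_eq_l2_opNorm {m n : Type*} [Fintype m] [Fintype n] [DecidableEq n]
    (A : Matrix m n ℝ) : opNorm A = ‖A‖ := rfl

lemma norm_toLp_mulVec_le {m n : Type*} [Fintype m] [Fintype n] [DecidableEq n]
    (A : Matrix m n ℝ) (x : n → ℝ) :
    ‖toLp 2 (A *ᵥ x)‖ ≤ ‖A‖ * ‖toLp 2 x‖ :=
  A.l2_opNorm_mulVec (toLp 2 x)

lemma l2_opNorm_le_one_of_transpose_mul_self {m n : Type*} [Fintype m] [Fintype n] [DecidableEq n]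
    {U : Matrix m n ℝ} (hU : Uᵀ * U = 1) : ‖U‖ ≤ 1 := by
  have h : ‖U‖ * ‖U‖ ≤ 1 := by
    rw [← l2_opNorm_conjTranspose_mul_self, conjTranspose_eq_transpose_of_trivial, hU,
      l2_opNorm_def]
    simp only [LinearEquiv.trans_apply, toLpLin_one]
    exact ContinuousLinearMap.norm_id_le
  nlinarith [norm_nonneg U]

section InverseBound

variable {ι : Type*} [DecidableEq ι] {S : Matrix ι ι ℝ} {a : ℝ}

lemma Matrix.PosSemidef.posDef_of_sub_smul (ha : 0 < a) (hS : (S - a • 1).PosSemidef) :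
    S.PosDef := by
  simpa using PosDef.posSemidef_add hS (PosDef.one.smul ha)

variable [Fintype ι]

lemma Matrix.PosSemidef.smul_norm_sq_le_dotProduct_mulVec (hS : (S - a • 1).PosSemidef)
    (y : ι → ℝ) :
    a * ‖toLp 2 y‖ ^ 2 ≤ y ⬝ᵥ S *ᵥ y := by
  have h := hS.dotProduct_mulVec_nonneg y
  simp only [star_trivial, sub_mulVec, smul_mulVec, one_mulVec, dotProduct_sub,
    dotProduct_smul, smul_eq_mul, dotProduct_self_eq_norm_sq] at h
  linarith

lemma Matrix.PosSemidef.dotProduct_inv_mulVec_le (ha : 0 < a) (hS : (S - a • 1).PosSemidef)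
    (x : ι → ℝ) : a * (x ⬝ᵥ S⁻¹ *ᵥ x) ≤ ‖toLp 2 x‖ ^ 2 := by
  set z := S⁻¹ *ᵥ x
  have hSz : S *ᵥ z = x := by
    rw [mulVec_mulVec, mul_nonsing_inv _ (hS.posDef_of_sub_smul ha).det_pos.ne'.isUnit,
      one_mulVec]
  have hz : a * ‖toLp 2 z‖ ≤ ‖toLp 2 x‖ := by
    have h : a * ‖toLp 2 z‖ ^ 2 ≤ ‖toLp 2 z‖ * ‖toLp 2 x‖ := calc
      a * ‖toLp 2 z‖ ^ 2 ≤ z ⬝ᵥ S *ᵥ z := hS.smul_norm_sq_le_dotProduct_mulVec z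
      _ = inner ℝ (toLp 2 z) (toLp 2 x) := by rw [hSz, dotProduct_eq_inner_toLp]
      _ ≤ ‖toLp 2 z‖ * ‖toLp 2 x‖ := real_inner_le_norm _ _
    rcases (norm_nonneg (toLp 2 z)).eq_or_lt with h0 | hpos
    · rw [← h0, mul_zero]; exact norm_nonneg _
    · nlinarith
  calc a * (x ⬝ᵥ z) = inner ℝ (toLp 2 x) (toLp 2 z) * a := by
        rw [dotProduct_eq_inner_toLp, mul_comm]
    _ ≤ ‖toLp 2 x‖ * ‖toLp 2 z‖ * a := by gcongr; exact real_inner_le_norm _ _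
    _ = ‖toLp 2 x‖ * (a * ‖toLp 2 z‖) := by ring
    _ ≤ ‖toLp 2 x‖ ^ 2 := by rw [sq]; exact mul_le_mul_of_nonneg_left hz (norm_nonneg _)

end InverseBound

lemma sqrt_mul_wnorm_inv_le {k : ℕ} {S : Matrix (Fin k) (Fin k) ℝ} {a : ℝ} (ha : 0 < a)
    (hS : (S - a • 1).PosSemidef) (x : Fin k → ℝ) : √a * wnorm S⁻¹ x ≤ ‖toLp 2 x‖ := by
  rw [wnorm, ← Real.sqrt_mul ha.le, ← Real.sqrt_sq (norm_nonneg (toLp 2 x))]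
  exact Real.sqrt_le_sqrt (hS.dotProduct_inv_mulVec_le ha x)

section Leakage

variable {m p r : Type*} [Fintype m] [Fintype p] [Fintype r] [DecidableEq p] [DecidableEq r]
  (A : Matrix m p ℝ) {V : Matrix p r ℝ}

lemma norm_toLp_transpose_mulVec_le (hV : ‖V‖ ≤ 1) (v : p → ℝ) :
    ‖toLp 2 (Vᵀ *ᵥ v)‖ ≤ ‖toLp 2 v‖ := by
  have hVt : ‖Vᵀ‖ ≤ 1 := by rwa [← conjTranspose_eq_transpose_of_trivial, l2_opNorm_conjTranspose]
  exact (norm_toLp_mulVec_le _ _).trans (mul_le_of_le_one_left (norm_nonneg _) hVt)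

lemma norm_leakage_term_le (hV : ‖V‖ ≤ 1) (φ δ : p → ℝ) :
    ‖toLp 2 ((φ ⬝ᵥ (V * Vᵀ) *ᵥ δ) • A *ᵥ ((V * Vᵀ) *ᵥ φ))‖
      ≤ ‖A * V‖ * ‖toLp 2 φ‖ ^ 2 * ‖toLp 2 δ‖ := by
  have hcoef : |φ ⬝ᵥ (V * Vᵀ) *ᵥ δ| ≤ ‖toLp 2 φ‖ * ‖toLp 2 δ‖ := by
    rw [← mulVec_mulVec, dotProduct_mulVec, ← mulVec_transpose, dotProduct_eq_inner_toLp]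
    exact (abs_real_inner_le_norm _ _).trans (mul_le_mul
      (norm_toLp_transpose_mulVec_le hV φ) (norm_toLp_transpose_mulVec_le hV δ)
      (norm_nonneg _) (norm_nonneg _))
  have hvec : ‖toLp 2 (A *ᵥ ((V * Vᵀ) *ᵥ φ))‖ ≤ ‖A * V‖ * ‖toLp 2 φ‖ := by
    rw [mulVec_mulVec, ← Matrix.mul_assoc, ← mulVec_mulVec]
    exact (norm_toLp_mulVec_le _ _).trans
      (mul_le_mul_of_nonneg_left (norm_toLp_transpose_mulVec_le hV φ) (norm_nonneg _))
  rw [toLp_smul, norm_smul, Real.norm_eq_abs]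
  calc |φ ⬝ᵥ (V * Vᵀ) *ᵥ δ| * ‖toLp 2 (A *ᵥ ((V * Vᵀ) *ᵥ φ))‖
      ≤ (‖toLp 2 φ‖ * ‖toLp 2 δ‖) * (‖A * V‖ * ‖toLp 2 φ‖) :=
        mul_le_mul hcoef hvec (norm_nonneg _) (by positivity)
    _ = ‖A * V‖ * ‖toLp 2 φ‖ ^ 2 * ‖toLp 2 δ‖ := by ring

lemma norm_leakage_le {ι : Type*} [Fintype ι] (hV : ‖V‖ ≤ 1) (φ : ι → p → ℝ) (δ : p → ℝ)
    {Δ L M : ℝ} (hA : ‖A * V‖ ≤ Δ) (hφ : ∀ t, ‖toLp 2 (φ t)‖ ≤ L) (hδ : ‖toLp 2 δ‖ ≤ M) :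
    ‖toLp 2 (∑ t, (φ t ⬝ᵥ (V * Vᵀ) *ᵥ δ) • A *ᵥ ((V * Vᵀ) *ᵥ φ t))‖
      ≤ Fintype.card ι * (Δ * L ^ 2 * M) := by
  rw [toLp_sum]
  refine (norm_sum_le _ _).trans ?_
  rw [← nsmul_eq_mul, ← Finset.card_univ, ← Finset.sum_const]
  refine Finset.sum_le_sum fun t _ => (norm_leakage_term_le A hV (φ t) δ).trans ?_
  have hΔ : 0 ≤ Δ := (norm_nonneg _).trans hA
  gcongr
  exact hφ t

end Leakage

theorem stmt19_general {p k n : ℕ}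
    (L M c Δ : ℝ) (hc : 0 < c)
    (Uhat₁ : Matrix (Fin p) (Fin k) ℝ) (U₂ : Matrix (Fin p) (Fin (p - k)) ℝ)
    (hU₂ : U₂ᵀ * U₂ = 1)
    (hcross : opNorm (Uhat₁ᵀ * U₂) ≤ Δ)
    (φ : Fin n → Fin p → ℝ) (hφ : ∀ t, Real.sqrt (φ t ⬝ᵥ φ t) ≤ L)
    (δ : Fin p → ℝ) (hδ : Real.sqrt (δ ⬝ᵥ δ) ≤ M)
    (S : Matrix (Fin k) (Fin k) ℝ)
    (hpsd : (S - (c * n) • (1 : Matrix (Fin k) (Fin k) ℝ)).PosSemidef) :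
    wnorm S⁻¹
        (∑ t, (φ t ⬝ᵥ ((U₂ * U₂ᵀ).mulVec δ))
          • Uhat₁ᵀ.mulVec ((U₂ * U₂ᵀ).mulVec (φ t)))
      ≤ Real.sqrt (n / c) * Δ * L ^ 2 * M := by
  have hx := norm_leakage_le Uhat₁ᵀ (l2_opNorm_le_one_of_transpose_mul_self hU₂) φ δ
    ((opNorm_eq_l2_opNorm _).symm.trans_le hcross)
    (fun t => (sqrt_dotProduct_self (φ t)).symm.trans_le (hφ t))
    ((sqrt_dotProduct_self δ).symm.trans_le hδ)
  rw [Fintype.card_fin] at hx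
  rcases n.eq_zero_or_pos with rfl | hn
  · simp [wnorm]
  have hcn : 0 < c * n := by positivity
  have hscale : √(c * n) * √(n / c) = n := by
    rw [← Real.sqrt_mul hcn.le, show c * n * (n / c) = (n : ℝ) ^ 2 by field_simp,
      Real.sqrt_sq n.cast_nonneg]
  refine le_of_mul_le_mul_left ?_ (Real.sqrt_pos.2 hcn)
  calc √(c * n) * wnorm S⁻¹ _ ≤ _ := sqrt_mul_wnorm_inv_le hcn hpsd _
    _ ≤ n * (Δ * L ^ 2 * M) := hx
    _ = √(c * n) * (√(n / c) * Δ * L ^ 2 * M) := by linear_combination -(Δ * L ^ 2 * M) * hscale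

/-- cross-subspace leakage bound.
With `‖Û₁ᵀ U₂‖_op ≤ Δ`, `‖φ_t‖₂ ≤ L`, `‖δ‖₂ ≤ M`, and
`S = Û₁ᵀ (∑ φ_t φ_tᵀ) Û₁ ⪰ c n I_k`, one has
`‖∑ Û₁ᵀ U₂U₂ᵀ φ_t φ_tᵀ U₂U₂ᵀ δ‖_{S⁻¹} ≤ √(n/c) Δ L² M`. -/
theorem stmt19 {p k n : ℕ} (hp : 1 ≤ p) (hk1 : 1 ≤ k) (hkp : k < p)
    (L M c Δ : ℝ) (hL : 0 < L) (hM : 0 < M) (hc : 0 < c) (hΔ : 0 < Δ)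
    (Uhat₁ : Matrix (Fin p) (Fin k) ℝ) (U₂ : Matrix (Fin p) (Fin (p - k)) ℝ)
    (hUhat₁ : Uhat₁ᵀ * Uhat₁ = 1) (hU₂ : U₂ᵀ * U₂ = 1)
    (hcross : opNorm (Uhat₁ᵀ * U₂) ≤ Δ)
    (φ : Fin n → Fin p → ℝ) (hφ : ∀ t, Real.sqrt (φ t ⬝ᵥ φ t) ≤ L)
    (δ : Fin p → ℝ) (hδ : Real.sqrt (δ ⬝ᵥ δ) ≤ M)
    (S : Matrix (Fin k) (Fin k) ℝ)
    (hS : S = Uhat₁ᵀ * (∑ t, vecMulVec (φ t) (φ t)) * Uhat₁)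
    (hpsd : (S - (c * n) • (1 : Matrix (Fin k) (Fin k) ℝ)).PosSemidef) :
    wnorm S⁻¹
        (∑ t, (φ t ⬝ᵥ ((U₂ * U₂ᵀ).mulVec δ))
          • Uhat₁ᵀ.mulVec ((U₂ * U₂ᵀ).mulVec (φ t)))
      ≤ Real.sqrt (n / c) * Δ * L ^ 2 * M :=
  stmt19_general L M c Δ hc Uhat₁ U₂ hU₂ hcross φ hφ δ hδ S hpsd
end
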